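/- Blindness lemma: for prime p ≥ 5, fixed key (x, y) ∈ Z_p × Z_p, and fixed message m ∈ Z_p, the map z ↦ (p*x*z² + p*y*z + p*m + z) mod p² is injective from Z_p \ {0} into Z_{p²}, and the induced value c mod p equals z; hence if z is uniform on Z_p \ {0}, then c mod p is uniform on Z_p \ {0} independently of (x, y, m). -/

import Mathlib

/-! The ciphertext is `z` plus a multiple of `p`, and reducing modulo `p ^ 2` does not change it
modulo `p`; so `c mod p = z` for `z < p`, which gives injectivity and exactly one preimage of
every nonzero residue. -/

namespace TwoPad

def encrypt (p x y m z : ℕ) : ℕ := (p * x * z ^ 2 + p * y * z + p * m + z) % p ^ 2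

theorem encrypt_mod (p x y m z : ℕ) : encrypt p x y m z % p = z % p := by
  rw [encrypt, Nat.mod_mod_of_dvd _ (dvd_pow_self p two_ne_zero),
    show p * x * z ^ 2 + p * y * z + p * m + z = z + (x * z ^ 2 + y * z + m) * p by ring,
    Nat.add_mul_mod_self_right]

theorem encrypt_mod_of_lt {p z : ℕ} (x y m : ℕ) (hz : z < p) : encrypt p x y m z % p = z := by
  rw [encrypt_mod, Nat.mod_eq_of_lt hz]

theorem injOn_encrypt (p x y m : ℕ) : Set.InjOn (encrypt p x y m) (Set.Iio p) := by
  intro z₁ hz₁ z₂ hz₂ h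
  rw [← encrypt_mod_of_lt x y m hz₁, h, encrypt_mod_of_lt x y m hz₂]

theorem filter_encrypt_mod_eq {p w : ℕ} (x y m : ℕ) (hw : w < p) (hw0 : w ≠ 0) :
    (Finset.range p).filter (fun z => z ≠ 0 ∧ encrypt p x y m z % p = w) = {w} := by
  ext z
  simp only [Finset.mem_filter, Finset.mem_range, Finset.mem_singleton]
  constructor
  · rintro ⟨hz, -, hzw⟩
    rwa [encrypt_mod_of_lt x y m hz] at hzw
  · rintro rfl
    exact ⟨hw, hw0, encrypt_mod_of_lt x y m hw⟩

end TwoPad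

open TwoPad in
theorem stmt_11_general (p x y m : ℕ) :
    (∀ z₁ z₂ : ℕ, z₁ < p → z₁ ≠ 0 → z₂ < p → z₂ ≠ 0 →
      (p * x * z₁ ^ 2 + p * y * z₁ + p * m + z₁) % p ^ 2
        = (p * x * z₂ ^ 2 + p * y * z₂ + p * m + z₂) % p ^ 2 → z₁ = z₂) ∧
    (∀ z : ℕ, z < p → z ≠ 0 →
      ((p * x * z ^ 2 + p * y * z + p * m + z) % p ^ 2) % p = z) ∧
    (∀ w : ℕ, w < p → w ≠ 0 →
      ((Finset.range p).filter (fun z => z ≠ 0 ∧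
        ((p * x * z ^ 2 + p * y * z + p * m + z) % p ^ 2) % p = w)).card = 1) :=
  ⟨fun _ _ h₁ _ h₂ _ h => injOn_encrypt p x y m h₁ h₂ h,
    fun _ hz _ => encrypt_mod_of_lt x y m hz,
    fun w hw hw0 =>
      (congrArg Finset.card (filter_encrypt_mod_eq x y m hw hw0)).trans (Finset.card_singleton w)⟩

theorem stmt_11 (p x y m : ℕ) (hp : p.Prime) (hp5 : 5 ≤ p)
    (hx : x < p) (hy : y < p) (hm : m < p) :
    (∀ z₁ z₂ : ℕ, z₁ < p → z₁ ≠ 0 → z₂ < p → z₂ ≠ 0 →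
      (p * x * z₁ ^ 2 + p * y * z₁ + p * m + z₁) % p ^ 2
        = (p * x * z₂ ^ 2 + p * y * z₂ + p * m + z₂) % p ^ 2 → z₁ = z₂) ∧
    (∀ z : ℕ, z < p → z ≠ 0 →
      ((p * x * z ^ 2 + p * y * z + p * m + z) % p ^ 2) % p = z) ∧
    (∀ w : ℕ, w < p → w ≠ 0 →
      ((Finset.range p).filter (fun z => z ≠ 0 ∧
        ((p * x * z ^ 2 + p * y * z + p * m + z) % p ^ 2) % p = w)).card = 1) :=
  stmt_11_general p x y m
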